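/- arXiv:1611.06658 — 2 statements merged into one kernel-verified Lean document; each statement's English description precedes it below -/
import Mathlib

section
/- For x in [sqrt(2)/2, 1] and y = y(x) = 2 - 2x + sqrt(12x^2 - 16x + 6)/2, the radius r(x) = x^2 + y(x)^2 - 1/2 is strictly positive. -/
theorem stmt_16 (x : ℝ) (hx : x ∈ Set.Icc (Real.sqrt 2 / 2) 1)
    (y : ℝ) (hy : y = 2 - 2*x + Real.sqrt (12*x^2 - 16*x + 6) / 2) :
    x^2 + y^2 - 1/2 > 0 := by
  obtain ⟨h1, h2⟩ := hx
  have hs : Real.sqrt (12*x^2 - 16*x + 6) > 0 := by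
    apply Real.sqrt_pos.mpr
    nlinarith [sq_nonneg (x - 2/3)]
  have hy0 : y > 0 := by rw [hy]; linarith
  have h2' : Real.sqrt 2 ^ 2 = 2 := Real.sq_sqrt (by norm_num)
  have hnn : (0:ℝ) ≤ Real.sqrt 2 := Real.sqrt_nonneg 2
  nlinarith [sq_nonneg (x - Real.sqrt 2 / 2)]
end

section
/- For y(x) = 2 - 2x + sqrt(12x^2 - 16x + 6)/2 with x in (sqrt(2)/2, 1), we have 1/2 < y(x) < 1 and x + y(x) > 1. -/
theorem stmt_18 (x : ℝ) (hx1 : Real.sqrt 2 / 2 < x) (hx2 : x < 1)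
    (y : ℝ) (hy : y = 2 - 2*x + Real.sqrt (12*x^2 - 16*x + 6) / 2) :
    1/2 < y ∧ y < 1 ∧ x + y > 1 := by
  have h2 : (Real.sqrt 2) ^ 2 = 2 := Real.sq_sqrt (by norm_num)
  have h2n : Real.sqrt 2 ≥ 0 := Real.sqrt_nonneg 2
  have hxsq : x ^ 2 > 1 / 2 := by nlinarith
  have hxpos : x > 1 / 2 := by nlinarith
  set s := Real.sqrt (12*x^2 - 16*x + 6) with hsdef
  have hin : (0:ℝ) < 12*x^2 - 16*x + 6 := by nlinarith
  have hs2 : s ^ 2 = 12*x^2 - 16*x + 6 := Real.sq_sqrt (le_of_lt hin)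
  have hs0 : s > 0 := Real.sqrt_pos.mpr hin
  refine ⟨?_, ?_, ?_⟩
  · -- y > 1/2 ⟺ s > 4x - 3
    have : s > 4*x - 3 := by nlinarith [sq_nonneg (s - (4*x-3)), sq_nonneg (s + (4*x-3))]
    rw [hy]; linarith
  · -- y < 1 ⟺ s < 4x - 2
    have : s < 4*x - 2 := by nlinarith [sq_nonneg (s - (4*x-2)), sq_nonneg (s + (4*x-2))]
    rw [hy]; linarith
  · rw [hy]; nlinarith
end
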